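/- Let n₁, n₂ be positive integers, α > 0, ε > 0, let Ω be a nonempty subset of {1,…,n₁}×{1,…,n₂} with m′ = |Ω|, and let R ∈ {−1, +1}^Ω. For Y ∈ ℝ^{n₁×n₂} define T(Y) = (1/m′) · Σ_{(i,j)∈Ω} |Y_{i,j} − α·R_{i,j}|. Suppose X, X̄ ∈ ℝ^{n₁×n₂} satisfy: (i) T(X) ≤ α + ε − ‖X‖_F²/(α n₁ n₂); (ii) T(X̄) ≤ α + ε − ‖X̄‖_F²/(α n₁ n₂); and (iii) with Z = (X + X̄)/2, ‖Z‖_F²/(α n₁ n₂) ≥ α − ε − T(Z). Then ‖X − X̄‖_F² ≤ 8 α n₁ n₂ ε. -/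
import Mathlib


/-- Frobenius norm of a real matrix. -/
noncomputable def frobR {n₁ n₂ : ℕ} (A : Matrix (Fin n₁) (Fin n₂) ℝ) : ℝ :=
  Real.sqrt (∑ i, ∑ j, (A i j) ^ 2)

lemma frobR_sq {n₁ n₂ : ℕ} (A : Matrix (Fin n₁) (Fin n₂) ℝ) :
    frobR A ^ 2 = ∑ i, ∑ j, (A i j) ^ 2 := by
  unfold frobR
  rw [Real.sq_sqrt]
  positivity

/-- Deterministic core of the proof of the paper's Theorem 1 (equations (37)–(41)). -/
theorem midpoint_parallelogram_bound (n₁ n₂ : ℕ) (hn₁ : 0 < n₁) (hn₂ : 0 < n₂)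
    (α ε : ℝ) (hα : 0 < α) (hε : 0 < ε)
    (Ω : Finset (Fin n₁ × Fin n₂)) (hΩ : Ω.Nonempty) (m' : ℕ) (hm' : m' = Ω.card)
    (R : Fin n₁ × Fin n₂ → ℝ) (hR : ∀ p ∈ Ω, R p = 1 ∨ R p = -1)
    (T : Matrix (Fin n₁) (Fin n₂) ℝ → ℝ)
    (hT : ∀ Y, T Y = (1 / (m' : ℝ)) * ∑ p ∈ Ω, |Y p.1 p.2 - α * R p|)
    (X Xbar : Matrix (Fin n₁) (Fin n₂) ℝ)
    (h₁ : T X ≤ α + ε - frobR X ^ 2 / (α * n₁ * n₂))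
    (h₂ : T Xbar ≤ α + ε - frobR Xbar ^ 2 / (α * n₁ * n₂))
    (h₃ : frobR (((1 : ℝ) / 2) • (X + Xbar)) ^ 2 / (α * n₁ * n₂) ≥ α - ε - T (((1 : ℝ) / 2) • (X + Xbar))) :
    frobR (X - Xbar) ^ 2 ≤ 8 * α * n₁ * n₂ * ε := by
  set Z := ((1 : ℝ) / 2) • (X + Xbar) with hZ
  have hm'pos : (0 : ℝ) < (m' : ℝ) := by
    have := Finset.card_pos.mpr hΩ
    exact_mod_cast hm' ▸ this
  -- midpoint bound on T
  have hTZ : T Z ≤ (T X + T Xbar) / 2 := by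
    rw [hT, hT, hT]
    have hsum : ∑ p ∈ Ω, |Z p.1 p.2 - α * R p|
        ≤ (∑ p ∈ Ω, (|X p.1 p.2 - α * R p| + |Xbar p.1 p.2 - α * R p|)) / 2 := by
      rw [Finset.sum_div]
      apply Finset.sum_le_sum
      intro p _
      have : Z p.1 p.2 - α * R p
          = ((X p.1 p.2 - α * R p) + (Xbar p.1 p.2 - α * R p)) / 2 := by
        simp [hZ, Matrix.add_apply]; ring
      rw [this, abs_div, abs_two]
      exact div_le_div_of_nonneg_right (abs_add_le _ _) two_pos.le |>.trans_eq rfl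
    rw [Finset.sum_add_distrib] at hsum
    have h1m : (0:ℝ) < 1 / (m' : ℝ) := by positivity
    calc 1 / (m' : ℝ) * ∑ p ∈ Ω, |Z p.1 p.2 - α * R p|
        ≤ 1 / (m' : ℝ) * ((∑ p ∈ Ω, |X p.1 p.2 - α * R p|
            + ∑ p ∈ Ω, |Xbar p.1 p.2 - α * R p|) / 2) := by
          exact mul_le_mul_of_nonneg_left hsum h1m.le
      _ = (1 / (m' : ℝ) * ∑ p ∈ Ω, |X p.1 p.2 - α * R p|
            + 1 / (m' : ℝ) * ∑ p ∈ Ω, |Xbar p.1 p.2 - α * R p|) / 2 := by ring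
  -- parallelogram law
  have hpar : frobR (X - Xbar) ^ 2
      = 2 * (frobR X ^ 2 + frobR Xbar ^ 2) - 4 * frobR Z ^ 2 := by
    rw [frobR_sq, frobR_sq, frobR_sq, frobR_sq]
    have hpt : ∀ i j, (X - Xbar) i j ^ 2
        = 2 * (X i j ^ 2 + Xbar i j ^ 2) - 4 * Z i j ^ 2 := by
      intro i j
      simp only [hZ, Matrix.sub_apply, Matrix.add_apply, Matrix.smul_apply, smul_eq_mul]
      ring
    simp only [hpt, Finset.sum_sub_distrib, Finset.sum_add_distrib, Finset.mul_sum,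
      ← Finset.sum_add_distrib]
  have hc : (0:ℝ) < α * n₁ * n₂ := by positivity
  -- combine
  have key : α - ε - (T X + T Xbar) / 2 ≤ frobR Z ^ 2 / (α * n₁ * n₂) := by
    have := h₃
    linarith
  have hX : frobR X ^ 2 / (α * n₁ * n₂) ≤ α + ε - T X := by linarith
  have hXb : frobR Xbar ^ 2 / (α * n₁ * n₂) ≤ α + ε - T Xbar := by linarith
  have hfin : frobR X ^ 2 + frobR Xbar ^ 2 - 2 * frobR Z ^ 2 ≤ 4 * ε * (α * n₁ * n₂) := by
    have e1 : frobR X ^ 2 = frobR X ^ 2 / (α * n₁ * n₂) * (α * n₁ * n₂) := by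
      field_simp
    have e2 : frobR Xbar ^ 2 = frobR Xbar ^ 2 / (α * n₁ * n₂) * (α * n₁ * n₂) := by
      field_simp
    have e3 : frobR Z ^ 2 = frobR Z ^ 2 / (α * n₁ * n₂) * (α * n₁ * n₂) := by
      field_simp
    rw [e1, e2, e3]
    nlinarith [key, hX, hXb, hc]
  nlinarith [hfin]
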